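/- arXiv:1905.07535 — 2 statements merged into one kernel-verified Lean document; each statement's English description precedes it below -/
import Mathlib

section
/- Let π be the permutation (a b c d e f g)(h i j k l m n) of the 16 vertices {a,…,p} of K_16 (fixing o and p), let F_0 = {ah, bi, cj, dk, el, fm, gn, op}, and let F_1 = {ab, cg, do, em, fi, hp, jl, kn}, F_2 = {ac, bk, dj, ei, fp, gl, ho, mn}. Then the 15 one-factors F_0, π^t(F_1), π^t(F_2) for t = 0,…,6 are pairwise disjoint and together partition the 120 edges of K_16, i.e., they form a 1-factorisation of K_16, and π is an automorphism of this 1-factorisation. -/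
/-- A 1-factor (perfect matching) of the complete graph `K_n`. -/
def IsPerfectMatchingKn (n : ℕ) (M : Finset (Sym2 (Fin n))) : Prop :=
  (∀ e ∈ M, ¬ e.IsDiag) ∧ ∀ v : Fin n, ∃! e, e ∈ M ∧ v ∈ e

/-- A 1-factorisation of `K_n`. -/
def IsOneFactorizationKn (n : ℕ) (F : Finset (Finset (Sym2 (Fin n)))) : Prop :=
  (∀ M ∈ F, IsPerfectMatchingKn n M) ∧
  (∀ M ∈ F, ∀ N ∈ F, M ≠ N → Disjoint M N) ∧
  (∀ e : Sym2 (Fin n), ¬ e.IsDiag → ∃ M ∈ F, e ∈ M)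

/-- The image of a 1-factorisation under a vertex permutation. -/
def permImage {n : ℕ} (π : Equiv.Perm (Fin n)) (F : Finset (Finset (Sym2 (Fin n)))) :
    Finset (Finset (Sym2 (Fin n))) :=
  F.image fun M => M.image (Sym2.map π)

/-- The permutation `(a b c d e f g)(h i j k l m n)` of the 16 vertices `a,…,p = 0,…,15`
(fixing `o = 14` and `p = 15`). -/
def π₇ : Equiv.Perm (Fin 16) :=
  ⟨![1, 2, 3, 4, 5, 6, 0, 8, 9, 10, 11, 12, 13, 7, 14, 15],
   ![6, 0, 1, 2, 3, 4, 5, 13, 7, 8, 9, 10, 11, 12, 14, 15],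
   by decide, by decide⟩

/-- `F₀ = {ah, bi, cj, dk, el, fm, gn, op}`. -/
def F₀ : Finset (Sym2 (Fin 16)) :=
  {s(0, 7), s(1, 8), s(2, 9), s(3, 10), s(4, 11), s(5, 12), s(6, 13), s(14, 15)}

/-- `F₁ = {ab, cg, do, em, fi, hp, jl, kn}`. -/
def F₁ : Finset (Sym2 (Fin 16)) :=
  {s(0, 1), s(2, 6), s(3, 14), s(4, 12), s(5, 8), s(7, 15), s(9, 11), s(10, 13)}

/-- `F₂ = {ac, bk, dj, ei, fp, gl, ho, mn}`. -/
def F₂ : Finset (Sym2 (Fin 16)) :=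
  {s(0, 2), s(1, 10), s(3, 9), s(4, 8), s(5, 15), s(6, 11), s(7, 14), s(12, 13)}

/-!
π has order 7 and fixes F₀, so it permutes the family {F₀} ∪ {πᵗ F₁} ∪ {πᵗ F₂} by shifting `t`.
Images of perfect matchings under a vertex permutation are perfect matchings, and each of the
15 factors has 8 edges. A single computation shows that their union has 120 = C(16, 2) edges;
counting then forces the factors to be pairwise disjoint (hence distinct, being nonempty) and
to cover every edge of K₁₆.
-/

open Finset Function

theorem Finset.pairwiseDisjoint_of_sum_card_le_card_biUnion {ι α : Type*} [DecidableEq ι]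
    [DecidableEq α] {s : Finset ι} {f : ι → Finset α}
    (h : ∑ i ∈ s, #(f i) ≤ #(s.biUnion f)) : (s : Set ι).PairwiseDisjoint f := by
  intro i hi j hj hij
  by_contra hij'
  obtain ⟨x, hxi, hxj⟩ := not_disjoint_iff.1 hij'
  have hx : x ∈ f i ∩ (s.erase i).biUnion f :=
    mem_inter.2 ⟨hxi, mem_biUnion.2 ⟨j, mem_erase.2 ⟨Ne.symm hij, hj⟩, hxj⟩⟩
  have hunion := card_union_add_card_inter (f i) ((s.erase i).biUnion f)
  have hpos := card_pos.2 ⟨x, hx⟩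
  have hrest : #((s.erase i).biUnion f) ≤ ∑ j ∈ s.erase i, #(f j) := card_biUnion_le
  rw [← biUnion_insert, insert_erase hi] at hunion
  rw [← add_sum_erase s _ hi] at h
  omega

theorem isPerfectMatchingKn_iff {n : ℕ} {M : Finset (Sym2 (Fin n))} :
    IsPerfectMatchingKn n M ↔ (∀ e ∈ M, ¬ e.IsDiag) ∧ ∀ v, #{e ∈ M | v ∈ e} = 1 := by
  simp only [IsPerfectMatchingKn, card_eq_one_iff_existsUnique, mem_filter]

namespace IsPerfectMatchingKn

variable {n : ℕ} {M : Finset (Sym2 (Fin n))}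

theorem nonempty [NeZero n] (hM : IsPerfectMatchingKn n M) : M.Nonempty :=
  have ⟨e, ⟨he, _⟩, _⟩ := hM.2 0
  ⟨e, he⟩

theorem image_map (hM : IsPerfectMatchingKn n M) (σ : Equiv.Perm (Fin n)) :
    IsPerfectMatchingKn n (M.image (Sym2.map σ)) := by
  refine ⟨?_, fun v => ?_⟩
  · rintro _ he
    obtain ⟨e, heM, rfl⟩ := mem_image.1 he
    rw [Sym2.isDiag_map σ.injective]
    exact hM.1 e heM
  · obtain ⟨e, ⟨he, hve⟩, huniq⟩ := hM.2 (σ.symm v)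
    refine ⟨e.map σ, ⟨mem_image_of_mem _ he, Sym2.mem_map.2 ⟨_, hve, σ.apply_symm_apply v⟩⟩, ?_⟩
    rintro _ ⟨hd, hvd⟩
    obtain ⟨d, hdM, rfl⟩ := mem_image.1 hd
    obtain ⟨a, ha, rfl⟩ := Sym2.mem_map.1 hvd
    rw [huniq d ⟨hdM, by rwa [σ.symm_apply_apply]⟩]

end IsPerfectMatchingKn

theorem exists_mem_of_choose_two_le_card_biUnion {α ι : Type*} [Fintype α] [DecidableEq α]
    {s : Finset ι} {f : ι → Finset (Sym2 α)} (hdiag : ∀ i ∈ s, ∀ e ∈ f i, ¬ e.IsDiag)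
    (hcard : (Fintype.card α).choose 2 ≤ #(s.biUnion f)) {e : Sym2 α} (he : ¬ e.IsDiag) :
    ∃ i ∈ s, e ∈ f i := by
  have hsub : s.biUnion f ⊆ univ.filter fun e : Sym2 α => ¬ e.IsDiag := by
    intro d hd
    obtain ⟨i, hi, hdi⟩ := mem_biUnion.1 hd
    exact mem_filter.2 ⟨mem_univ d, hdiag i hi d hdi⟩
  have hD : #(univ.filter fun e : Sym2 α => ¬ e.IsDiag) = (Fintype.card α).choose 2 := by
    rw [← Fintype.card_subtype, Sym2.card_subtype_not_diag]
  rw [← mem_biUnion, eq_of_subset_of_card_le hsub (hD ▸ hcard)]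
  exact mem_filter.2 ⟨mem_univ e, he⟩

theorem isOneFactorizationKn_univ_image {n : ℕ} {ι : Type*} [Fintype ι] [DecidableEq ι]
    {f : ι → Finset (Sym2 (Fin n))} (hf : ∀ i, IsPerfectMatchingKn n (f i))
    (hdisj : Pairwise (Disjoint on f)) (hcard : n.choose 2 ≤ #(univ.biUnion f)) :
    IsOneFactorizationKn n (univ.image f) := by
  refine ⟨?_, ?_, fun e he => ?_⟩
  · simpa only [forall_mem_image] using fun i _ => hf i
  · simp only [forall_mem_image]
    exact fun i _ j _ hij => hdisj (ne_of_apply_ne f hij)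
  obtain ⟨i, -, hi⟩ := exists_mem_of_choose_two_le_card_biUnion (s := univ) (f := f)
    (fun i _ => (hf i).1) (by rwa [Fintype.card_fin]) he
  exact ⟨f i, mem_image_of_mem f (mem_univ i), hi⟩

theorem image_map_pow_image_map {α : Type*} [DecidableEq α] {σ : Equiv.Perm α} {k : ℕ}
    [NeZero k] (hσ : σ ^ k = 1) (M : Finset (Sym2 α)) (t : Fin k) :
    (M.image (Sym2.map ⇑(σ ^ (t : ℕ)))).image (Sym2.map σ) =
      M.image (Sym2.map ⇑(σ ^ ((t + 1 : Fin k) : ℕ))) := by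
  rw [image_image, ← Sym2.map_comp, ← Equiv.Perm.coe_mul, ← pow_succ', Fin.val_add,
    Fin.val_one', Nat.add_mod_mod, ← pow_eq_pow_mod _ hσ]

def factor : Option (Bool × Fin 7) → Finset (Sym2 (Fin 16))
  | none => F₀
  | some (false, t) => F₁.image (Sym2.map ⇑(π₇ ^ (t : ℕ)))
  | some (true, t) => F₂.image (Sym2.map ⇑(π₇ ^ (t : ℕ)))

def factorShift : Equiv.Perm (Option (Bool × Fin 7)) :=
  Equiv.optionCongr ((Equiv.refl Bool).prodCongr (Equiv.addRight 1))

theorem univ_image_factor : univ.image factor = insert F₀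
    (((range 7).image fun t => F₁.image (Sym2.map ⇑(π₇ ^ t))) ∪
      ((range 7).image fun t => F₂.image (Sym2.map ⇑(π₇ ^ t)))) := by
  ext M
  simp [factor, Option.exists, Prod.exists, Bool.exists_bool, Fin.exists_iff, eq_comm]

set_option maxRecDepth 10000 in
theorem isPerfectMatchingKn_factor (i : Option (Bool × Fin 7)) :
    IsPerfectMatchingKn 16 (factor i) := by
  rcases i with _ | ⟨_ | _, t⟩
  · exact isPerfectMatchingKn_iff.2 (by decide)
  · exact (isPerfectMatchingKn_iff.2 (by decide)).image_map _
  · exact (isPerfectMatchingKn_iff.2 (by decide)).image_map _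

set_option maxRecDepth 10000 in
theorem card_factor (i : Option (Bool × Fin 7)) : #(factor i) = 8 := by
  rcases i with _ | ⟨_ | _, t⟩
  · rfl
  · rw [factor, card_image_of_injective _ (Sym2.map.injective (Equiv.injective _))]; rfl
  · rw [factor, card_image_of_injective _ (Sym2.map.injective (Equiv.injective _))]; rfl

set_option maxRecDepth 10000 in
theorem card_biUnion_factor : #(univ.biUnion factor) = 120 := by decide

set_option maxRecDepth 10000 in
theorem image_map_factor (i : Option (Bool × Fin 7)) :
    (factor i).image (Sym2.map π₇) = factor (factorShift i) := by
  have hπ₇ : π₇ ^ 7 = 1 := by decide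
  rcases i with _ | ⟨_ | _, t⟩
  · decide
  · exact image_map_pow_image_map hπ₇ F₁ t
  · exact image_map_pow_image_map hπ₇ F₂ t

theorem pairwise_disjoint_factor : Pairwise (Disjoint on factor) := by
  have h := pairwiseDisjoint_of_sum_card_le_card_biUnion (s := univ) (f := factor)
    (by simp only [card_factor, sum_const, card_univ, card_biUnion_factor]; rfl)
  simpa only [coe_univ, Set.PairwiseDisjoint, Set.pairwise_univ] using h

/-- The 15 one-factors `F₀`, `π^t(F₁)`, `π^t(F₂)` for `t = 0,…,6` are pairwise distinct and
together form a 1-factorisation of `K₁₆` (in particular they are pairwise disjoint and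
partition the 120 edges), and `π = (a b c d e f g)(h i j k l m n)` is an automorphism of
this 1-factorisation. -/
theorem stmt15 :
    let 𝓕 : Finset (Finset (Sym2 (Fin 16))) :=
      insert F₀
        (((Finset.range 7).image fun t => F₁.image (Sym2.map ⇑(π₇ ^ t))) ∪
         ((Finset.range 7).image fun t => F₂.image (Sym2.map ⇑(π₇ ^ t))))
    𝓕.card = 15 ∧ IsOneFactorizationKn 16 𝓕 ∧ permImage π₇ 𝓕 = 𝓕 := by
  intro 𝓕
  have hinj : Injective factor := fun i j hij => by
    by_contra hne
    exact (pairwise_disjoint_factor hne).ne (isPerfectMatchingKn_factor i).nonempty.ne_empty hij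
  rw [show 𝓕 = univ.image factor from univ_image_factor.symm]
  refine ⟨?_, isOneFactorizationKn_univ_image isPerfectMatchingKn_factor
    pairwise_disjoint_factor card_biUnion_factor.ge, ?_⟩
  · rw [card_image_of_injective _ hinj]; rfl
  · rw [permImage, image_image, show (image (Sym2.map π₇)) ∘ factor = factor ∘ factorShift from
      funext image_map_factor, ← image_image, image_univ_of_surjective factorShift.surjective]
end

section
/- The explicit 15×15 matrix N_15 given in the paper is a symmetric idempotent Latin square of order 15, but it is not row-Hamiltonian: rows 1 and 7 contain a row cycle of length 3 (on columns 6, 9, 10 with symbol pairs (8,3), (13,8), (3,13)). -/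
/-!
Rows of a Latin square are bijections, so any two rows `r ≠ s` determine the permutation
`σ = L s ∘ (L r)⁻¹` of the symbols. In `N₁₅` the permutation between rows 0 and 6 sends
`7 ↦ 2 ↦ 12 ↦ 7`, so `σ ^ 3` has a fixed point in its support; a cycle whose support is all
15 symbols has order 15 and no such fixed point.
-/

/-- The Latin square `N₁₅` of the paper, with rows, columns and symbols written 0-based
(entry `k` here represents symbol `k+1` of the paper). -/
def N15 : Matrix (Fin 15) (Fin 15) (Fin 15) :=
  !![0, 11, 1, 6, 9, 7, 4, 14, 12, 2, 5, 3, 13, 10, 8;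
     11, 1, 12, 2, 7, 10, 8, 5, 14, 13, 3, 6, 4, 0, 9;
     1, 12, 2, 13, 3, 8, 11, 9, 6, 14, 0, 4, 7, 5, 10;
     6, 2, 13, 3, 0, 4, 9, 12, 10, 7, 14, 1, 5, 8, 11;
     9, 7, 3, 0, 4, 1, 5, 10, 13, 11, 8, 14, 2, 6, 12;
     7, 10, 8, 4, 1, 5, 2, 6, 11, 0, 12, 9, 14, 3, 13;
     4, 8, 11, 9, 5, 2, 6, 3, 7, 12, 1, 13, 10, 14, 0;
     14, 5, 9, 12, 10, 6, 3, 7, 4, 8, 13, 2, 0, 11, 1;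
     12, 14, 6, 10, 13, 11, 7, 4, 8, 5, 9, 0, 3, 1, 2;
     2, 13, 14, 7, 11, 0, 12, 8, 5, 9, 6, 10, 1, 4, 3;
     5, 3, 0, 14, 8, 12, 1, 13, 9, 6, 10, 7, 11, 2, 4;
     3, 6, 4, 1, 14, 9, 13, 2, 0, 10, 7, 11, 8, 12, 5;
     13, 4, 7, 5, 2, 14, 10, 0, 3, 1, 11, 8, 12, 9, 6;
     10, 0, 5, 8, 6, 3, 14, 11, 1, 4, 2, 12, 9, 13, 7;
     8, 9, 10, 11, 12, 13, 0, 1, 2, 3, 4, 5, 6, 7, 14]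

open Finset Equiv

theorem Equiv.Perm.IsCycle.pow_apply_ne_self_of_support_eq_univ {α : Type*} [Fintype α]
    [DecidableEq α] {σ : Perm α} (hc : σ.IsCycle) (hs : σ.support = univ) {k : ℕ}
    (hk0 : 0 < k) (hk : k < Fintype.card α) (x : α) : (σ ^ k) x ≠ x := by
  intro hx
  have hσx : σ x ≠ x := Perm.mem_support.1 (hs ▸ mem_univ x)
  have hpow : σ ^ k = 1 := (hc.pow_eq_one_iff' hσx).2 hx
  have hord : orderOf σ = Fintype.card α := by rw [hc.orderOf, hs, card_univ]
  have := Nat.le_of_dvd hk0 (orderOf_dvd_of_pow_eq_one hpow)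
  omega

noncomputable def Matrix.rowPerm {n : Type*} [Finite n] (L : Matrix n n n)
    (hL : ∀ i, Function.Injective (L i)) (r s : n) : Perm n :=
  (Equiv.ofBijective (L r) (hL r).bijective_of_finite).symm.trans
    (Equiv.ofBijective (L s) (hL s).bijective_of_finite)

theorem Matrix.rowPerm_apply_apply {n : Type*} [Finite n] (L : Matrix n n n)
    (hL : ∀ i, Function.Injective (L i)) (r s j : n) : L.rowPerm hL r s (L r j) = L s j := by
  simp [Matrix.rowPerm]

theorem N15_isSymm : N15.IsSymm := by
  unfold Matrix.IsSymm; decide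

theorem N15_diag (i : Fin 15) : N15 i i = i := by
  revert i; decide

theorem N15_row_injective (i : Fin 15) : Function.Injective (N15 i) := by
  unfold Function.Injective; revert i; decide

theorem N15_col_injective (j : Fin 15) : Function.Injective fun i => N15 i j := by
  unfold Function.Injective; revert j; decide

theorem N15_rowCycle (σ : Perm (Fin 15)) (hσ : ∀ j, σ (N15 0 j) = N15 6 j) :
    σ 7 = 2 ∧ σ 12 = 7 ∧ σ 2 = 12 :=
  ⟨hσ 5, hσ 8, hσ 9⟩

theorem N15_not_rowHamiltonian :
    ¬ ∀ r s : Fin 15, r ≠ s → ∀ σ : Perm (Fin 15),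
        (∀ j, σ (N15 r j) = N15 s j) → σ.IsCycle ∧ σ.support = univ := by
  intro h
  set σ := N15.rowPerm N15_row_injective 0 6
  have hσ : ∀ j, σ (N15 0 j) = N15 6 j := N15.rowPerm_apply_apply N15_row_injective 0 6
  obtain ⟨h7, h12, h2⟩ := N15_rowCycle σ hσ
  obtain ⟨hc, hs⟩ := h 0 6 (by decide) σ hσ
  refine hc.pow_apply_ne_self_of_support_eq_univ hs (k := 3) (by norm_num) (by simp) 7 ?_
  simp [pow_succ, h7, h2, h12]

/-- `N₁₅` is a symmetric idempotent Latin square of order 15 which is not row-Hamiltonian: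
rows 1 and 7 (0-based: 0 and 6) contain a row cycle of length 3, namely the symbol
permutation `σ` between these two rows satisfies `σ(8) = 3`, `σ(13) = 8`, `σ(3) = 13`
(0-based: `σ(7) = 2`, `σ(12) = 7`, `σ(2) = 12`). -/
theorem stmt17 :
    (∀ i j : Fin 15, N15 i j = N15 j i) ∧
    (∀ i : Fin 15, N15 i i = i) ∧
    (∀ i : Fin 15, Function.Injective (N15 i)) ∧
    (∀ j : Fin 15, Function.Injective fun i => N15 i j) ∧
    ¬ (∀ r s : Fin 15, r ≠ s → ∀ σ : Equiv.Perm (Fin 15),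
        (∀ j, σ (N15 r j) = N15 s j) → σ.IsCycle ∧ σ.support = Finset.univ) ∧
    (∀ σ : Equiv.Perm (Fin 15), (∀ j, σ (N15 0 j) = N15 6 j) →
        σ 7 = 2 ∧ σ 12 = 7 ∧ σ 2 = 12) :=
  ⟨fun i j => N15_isSymm.apply j i, N15_diag, N15_row_injective, N15_col_injective,
    N15_not_rowHamiltonian, N15_rowCycle⟩
end
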